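/- There exists a shoe economy with three agents whose weak core is empty: three allocations X, Y, Z exist such that every individually rational allocation is strongly blocked, with Y blocking X (via agents 2,3), Z blocking Y (via agents 1,3), and X blocking Z (via agents 1,2). -/
import Mathlib


/-- Objects of the shoe economy: `Sum.inl a` is the left shoe `ℓ_a`,
`Sum.inr b` the right shoe `r_b`. -/
abbrev Shoe := Fin 3 ⊕ Fin 3

def shoeEndow (i : Fin 3) : Finset Shoe := {Sum.inl i, Sum.inr i}

/-- A bundle consisting of exactly one left and one right shoe. -/
def IsPairBundle (X : Finset Shoe) : Prop :=
  ∃ a b : Fin 3, X = {Sum.inl a, Sum.inr b}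

def IsSAlloc (X : Fin 3 → Finset Shoe) (S : Finset (Fin 3)) : Prop :=
  (∀ i ∈ S, ∀ j ∈ S, i ≠ j → Disjoint (X i) (X j)) ∧
    S.biUnion X ⊆ S.biUnion shoeEndow

/-- `v` ranks, for agent `i`, the bundles `b1 ≻ b2 ≻ b3 ≻` every other
pair bundle; non-pair bundles get `⊥`. -/
def ShoeRanking (v : Fin 3 → Finset Shoe → EReal) (i : Fin 3)
    (b1 b2 b3 : Finset Shoe) : Prop :=
  v i b2 < v i b1 ∧ v i b3 < v i b2 ∧
    ∀ X : Finset Shoe, IsPairBundle X → X ≠ b1 → X ≠ b2 → X ≠ b3 → v i X < v i b3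

instance : DecidablePred IsPairBundle := fun X => by
  unfold IsPairBundle; infer_instance

/-- best bundle of each agent -/
def sb1 : Fin 3 → Finset Shoe
  | 0 => {Sum.inl 0, Sum.inr 1}
  | 1 => {Sum.inl 1, Sum.inr 2}
  | 2 => {Sum.inl 0, Sum.inr 2}

/-- second-best bundle of each agent -/
def sb2 : Fin 3 → Finset Shoe
  | 0 => {Sum.inl 2, Sum.inr 0}
  | 1 => {Sum.inl 1, Sum.inr 0}
  | 2 => {Sum.inl 2, Sum.inr 1}

/-- third-best bundle of each agent (the endowment) -/
def sb3 : Fin 3 → Finset Shoe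
  | 0 => {Sum.inl 0, Sum.inr 0}
  | 1 => {Sum.inl 1, Sum.inr 1}
  | 2 => {Sum.inl 2, Sum.inr 2}

def srank (i : Fin 3) (X : Finset Shoe) : ℕ :=
  if X = sb1 i then 3 else if X = sb2 i then 2 else if X = sb3 i then 1 else 0

noncomputable def sv (i : Fin 3) (X : Finset Shoe) : EReal :=
  if IsPairBundle X then (((srank i X : ℕ) : ℝ) : EReal) else ⊥

lemma sv_of_pair {X : Finset Shoe} (i : Fin 3) (h : IsPairBundle X) :
    sv i X = (((srank i X : ℕ) : ℝ) : EReal) := by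
  simp only [sv, if_pos h]

lemma sv_lt_sv {i : Fin 3} {X Y : Finset Shoe} (hX : IsPairBundle X)
    (hY : IsPairBundle Y) (h : srank i X < srank i Y) : sv i X < sv i Y := by
  rw [sv_of_pair i hX, sv_of_pair i hY]
  exact_mod_cast h

lemma srank_eq_zero {i : Fin 3} {X : Finset Shoe} (h1 : X ≠ sb1 i)
    (h2 : X ≠ sb2 i) (h3 : X ≠ sb3 i) : srank i X = 0 := by
  simp only [srank, if_neg h1, if_neg h2, if_neg h3]

lemma shoeRanking_sv (i : Fin 3) : ShoeRanking sv i (sb1 i) (sb2 i) (sb3 i) := by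
  refine ⟨?_, ?_, ?_⟩
  · apply sv_lt_sv
    · fin_cases i <;> exact ⟨_, _, rfl⟩
    · fin_cases i <;> exact ⟨_, _, rfl⟩
    · fin_cases i <;> decide
  · apply sv_lt_sv
    · fin_cases i <;> exact ⟨_, _, rfl⟩
    · fin_cases i <;> exact ⟨_, _, rfl⟩
    · fin_cases i <;> decide
  · intro X hp h1 h2 h3
    apply sv_lt_sv hp
    · fin_cases i <;> exact ⟨_, _, rfl⟩
    · rw [srank_eq_zero h1 h2 h3]
      fin_cases i <;> decide

lemma block_case1 (X : Fin 3 → Finset Shoe)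
    (e1 : X 1 = {Sum.inl 1, Sum.inr 0}) (e2 : X 2 = {Sum.inl 2, Sum.inr 2}) :
    ∃ (S : Finset (Fin 3)) (X' : Fin 3 → Finset Shoe), S.Nonempty ∧
      IsSAlloc X' S ∧ ∀ i ∈ S, sv i (X i) < sv i (X' i) := by
  refine ⟨{1, 2}, ![∅, {Sum.inl 1, Sum.inr 2}, {Sum.inl 2, Sum.inr 1}],
    ⟨1, by decide⟩, ⟨by decide, by decide⟩, ?_⟩
  intro i hi
  fin_cases hi
  · rw [e1]; exact sv_lt_sv ⟨_, _, rfl⟩ ⟨_, _, rfl⟩ (by decide)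
  · rw [e2]; exact sv_lt_sv ⟨_, _, rfl⟩ ⟨_, _, rfl⟩ (by decide)

lemma block_case2 (X : Fin 3 → Finset Shoe)
    (e0 : X 0 = {Sum.inl 2, Sum.inr 0}) (e1 : X 1 = {Sum.inl 1, Sum.inr 1}) :
    ∃ (S : Finset (Fin 3)) (X' : Fin 3 → Finset Shoe), S.Nonempty ∧
      IsSAlloc X' S ∧ ∀ i ∈ S, sv i (X i) < sv i (X' i) := by
  refine ⟨{0, 1}, ![{Sum.inl 0, Sum.inr 1}, {Sum.inl 1, Sum.inr 0}, ∅],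
    ⟨0, by decide⟩, ⟨by decide, by decide⟩, ?_⟩
  intro i hi
  fin_cases hi
  · rw [e0]; exact sv_lt_sv ⟨_, _, rfl⟩ ⟨_, _, rfl⟩ (by decide)
  · rw [e1]; exact sv_lt_sv ⟨_, _, rfl⟩ ⟨_, _, rfl⟩ (by decide)

lemma block_case3 (X : Fin 3 → Finset Shoe)
    (e0 : X 0 = {Sum.inl 0, Sum.inr 0}) (e2 : X 2 = {Sum.inl 2, Sum.inr 1}) :
    ∃ (S : Finset (Fin 3)) (X' : Fin 3 → Finset Shoe), S.Nonempty ∧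
      IsSAlloc X' S ∧ ∀ i ∈ S, sv i (X i) < sv i (X' i) := by
  refine ⟨{0, 2}, ![{Sum.inl 2, Sum.inr 0}, ∅, {Sum.inl 0, Sum.inr 2}],
    ⟨0, by decide⟩, ⟨by decide, by decide⟩, ?_⟩
  intro i hi
  fin_cases hi
  · rw [e0]; exact sv_lt_sv ⟨_, _, rfl⟩ ⟨_, _, rfl⟩ (by decide)
  · rw [e2]; exact sv_lt_sv ⟨_, _, rfl⟩ ⟨_, _, rfl⟩ (by decide)

lemma block_case4 (X : Fin 3 → Finset Shoe)
    (e1 : X 1 = {Sum.inl 1, Sum.inr 1}) (e2 : X 2 = {Sum.inl 2, Sum.inr 2}) :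
    ∃ (S : Finset (Fin 3)) (X' : Fin 3 → Finset Shoe), S.Nonempty ∧
      IsSAlloc X' S ∧ ∀ i ∈ S, sv i (X i) < sv i (X' i) := by
  refine ⟨{1, 2}, ![∅, {Sum.inl 1, Sum.inr 2}, {Sum.inl 2, Sum.inr 1}],
    ⟨1, by decide⟩, ⟨by decide, by decide⟩, ?_⟩
  intro i hi
  fin_cases hi
  · rw [e1]; exact sv_lt_sv ⟨_, _, rfl⟩ ⟨_, _, rfl⟩ (by decide)
  · rw [e2]; exact sv_lt_sv ⟨_, _, rfl⟩ ⟨_, _, rfl⟩ (by decide)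

/-- there is a shoe economy with three agents whose weak core is
empty: every allocation (in particular every individually rational one) is
strongly blocked by some coalition. -/
theorem shoe_economy_empty_weak_core :
    ∃ v : Fin 3 → Finset Shoe → EReal,
      -- utilities are −∞ except on bundles of one left and one right shoe
      (∀ i X, ¬ IsPairBundle X → v i X = ⊥) ∧
      (∀ i X, IsPairBundle X → v i X ≠ ⊥) ∧
      -- agent 1: (ℓ1,r2) ≻ (ℓ3,r1) ≻ (ℓ1,r1) ≻ rest
      ShoeRanking v 0 {Sum.inl 0, Sum.inr 1} {Sum.inl 2, Sum.inr 0} {Sum.inl 0, Sum.inr 0} ∧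
      -- agent 2: (ℓ2,r3) ≻ (ℓ2,r1) ≻ (ℓ2,r2) ≻ rest
      ShoeRanking v 1 {Sum.inl 1, Sum.inr 2} {Sum.inl 1, Sum.inr 0} {Sum.inl 1, Sum.inr 1} ∧
      -- agent 3: (ℓ1,r3) ≻ (ℓ3,r2) ≻ (ℓ3,r3) ≻ rest
      ShoeRanking v 2 {Sum.inl 0, Sum.inr 2} {Sum.inl 2, Sum.inr 1} {Sum.inl 2, Sum.inr 2} ∧
      -- the weak core is empty: every allocation is strongly blocked
      (∀ X : Fin 3 → Finset Shoe, IsSAlloc X Finset.univ →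
        ∃ (S : Finset (Fin 3)) (X' : Fin 3 → Finset Shoe), S.Nonempty ∧
          IsSAlloc X' S ∧ ∀ i ∈ S, v i (X i) < v i (X' i)) := by
  refine ⟨sv, ?_, ?_, shoeRanking_sv 0, shoeRanking_sv 1, shoeRanking_sv 2, ?_⟩
  · intro i X h
    simp only [sv, if_neg h]
  · intro i X h
    rw [sv_of_pair i h]
    exact EReal.coe_ne_bot _
  · intro X hX
    -- either some agent does worse than their endowment, or everyone is in top 3
    by_cases hblock : ∃ i : Fin 3, sv i (X i) < sv i (sb3 i)
    · obtain ⟨i, hi⟩ := hblock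
      refine ⟨{i}, shoeEndow, ⟨i, Finset.mem_singleton_self i⟩,
        ⟨?_, le_refl _⟩, ?_⟩
      · intro a ha b hb hab
        rw [Finset.mem_singleton] at ha hb
        exact absurd (ha.trans hb.symm) hab
      · intro j hj
        rw [Finset.mem_singleton] at hj
        subst hj
        have : sb3 j = shoeEndow j := by fin_cases j <;> rfl
        rwa [this] at hi
    · push_neg at hblock
      have hmem : ∀ i : Fin 3, X i = sb1 i ∨ X i = sb2 i ∨ X i = sb3 i := by
        intro i
        by_cases hp : IsPairBundle (X i)
        · by_cases h1 : X i = sb1 i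
          · exact Or.inl h1
          by_cases h2 : X i = sb2 i
          · exact Or.inr (Or.inl h2)
          by_cases h3 : X i = sb3 i
          · exact Or.inr (Or.inr h3)
          exact absurd (sv_lt_sv hp (by fin_cases i <;> exact ⟨_, _, rfl⟩)
            (by rw [srank_eq_zero h1 h2 h3]; fin_cases i <;> decide))
            (not_lt.2 (hblock i))
        · exfalso
          refine absurd ?_ (not_lt.2 (hblock i))
          have hb : sv i (X i) = ⊥ := by simp only [sv, if_neg hp]
          rw [hb, sv_of_pair i (by fin_cases i <;> exact ⟨_, _, rfl⟩)]
          exact EReal.bot_lt_coe _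
      have d01 : Disjoint (X 0) (X 1) :=
        hX.1 0 (Finset.mem_univ _) 1 (Finset.mem_univ _) (by decide)
      have d02 : Disjoint (X 0) (X 2) :=
        hX.1 0 (Finset.mem_univ _) 2 (Finset.mem_univ _) (by decide)
      have d12 : Disjoint (X 1) (X 2) :=
        hX.1 1 (Finset.mem_univ _) 2 (Finset.mem_univ _) (by decide)
      have h0 := hmem 0
      have h1 := hmem 1
      have h2 := hmem 2
      simp only [sb1, sb2, sb3] at h0 h1 h2
      rcases h0 with e0 | e0 | e0 <;> rcases h1 with e1 | e1 | e1 <;>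
        rcases h2 with e2 | e2 | e2 <;>
        rw [e0, e1] at d01 <;> rw [e0, e2] at d02 <;> rw [e1, e2] at d12 <;>
        first
          | exact absurd d01 (by decide)
          | exact absurd d02 (by decide)
          | exact absurd d12 (by decide)
          | exact block_case1 X e1 e2
          | exact block_case2 X e0 e1
          | exact block_case3 X e0 e2
          | exact block_case4 X e1 e2
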